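/- Let P be a bounded Voronoi cell in a packing of unit balls in ℝ^d. Then for every face F of P of dimension d−i, where 1 ≤ i ≤ d, one has √(2i/(i+1)) ≤ R(F). -/

import Mathlib

open MeasureTheory Metric

noncomputable section

/-- The Voronoi cell of the unit ball centered at the origin, with respect to the set `C`
of centers of a unit ball packing. -/
def VoronoiCell {d : ℕ} (C : Set (EuclideanSpace ℝ (Fin d))) :
    Set (EuclideanSpace ℝ (Fin d)) :=
  {x | ∀ c ∈ C, ‖x‖ ≤ ‖x - c‖}

/-- `C` is the set of centers of a packing of unit balls, one of which is centered at the
origin. -/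
def IsUnitBallPacking {d : ℕ} (C : Set (EuclideanSpace ℝ (Fin d))) : Prop :=
  (0 : EuclideanSpace ℝ (Fin d)) ∈ C ∧ ∀ c ∈ C, ∀ c' ∈ C, c ≠ c' → 2 ≤ ‖c - c'‖

/-- `F` is a (nonempty, exposed) face of `P` of dimension `k`. -/
def IsFaceDim {d : ℕ} (P F : Set (EuclideanSpace ℝ (Fin d))) (k : ℕ) : Prop :=
  IsExposed ℝ P F ∧ F.Nonempty ∧ Module.finrank ℝ (affineSpan ℝ F).direction = k

/-- `R(F)`: the distance from the origin to the affine hull of `F`. -/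
def faceDist {d : ℕ} (F : Set (EuclideanSpace ℝ (Fin d))) : ℝ :=
  Metric.infDist 0 (affineSpan ℝ F : Set (EuclideanSpace ℝ (Fin d)))

/-!
Take `x` in the relative interior of `F` and let `S` be the set of centers equidistant from `x`
and from the origin (the origin included). Since a linear functional that is maximal on `F` at a
relative interior point is constant on the affine hull, every point `q` of the affine hull of `F`
is equidistant from all points of `S`. The packing is locally finite, so near `x` the cell is cut
out by the constraints coming from `S` alone; moving orthogonally to `span S` therefore stays in
the cell in both directions, hence in the face `F`. Thus `span S` has dimension at least `i`, and
`S` contains `i + 1` points at mutual distance at least `2` on the sphere of radius `‖q‖` around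
`q`. Expanding `‖∑ (c - q)‖² ≥ 0` gives Rogers' simplex bound `‖q‖² ≥ 2i / (i + 1)`.
-/

open Filter Topology Module Finset
open scoped RealInnerProductSpace

section InnerProductSpace

variable {E : Type*} [NormedAddCommGroup E] [InnerProductSpace ℝ E]

theorem norm_le_norm_sub_iff (x c : E) : ‖x‖ ≤ ‖x - c‖ ↔ 2 * ⟪x, c⟫ ≤ ‖c‖ ^ 2 := by
  rw [← sq_le_sq₀ (norm_nonneg _) (norm_nonneg _), norm_sub_sq_real]
  constructor <;> intro h <;> linarith

theorem norm_sub_eq_norm_iff (x c : E) : ‖x - c‖ = ‖x‖ ↔ 2 * ⟪x, c⟫ = ‖c‖ ^ 2 := by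
  rw [← sq_eq_sq₀ (norm_nonneg _) (norm_nonneg _), norm_sub_sq_real]
  constructor <;> intro h <;> linarith

theorem nat_mul_sq_le_of_pairwise_le_norm_sub {T : Finset E} {n : ℕ} (hT : #T = n + 1)
    {a r : ℝ} (ha : 0 ≤ a) (hsep : (T : Set E).Pairwise fun c c' => a ≤ ‖c - c'‖)
    {q : E} (hq : ∀ c ∈ T, ‖c - q‖ = r) :
    n * a ^ 2 ≤ 2 * (n + 1) * r ^ 2 := by
  classical
  have inner_eq : ∀ c ∈ T, ∀ c' ∈ T, ⟪c - q, c' - q⟫ = r ^ 2 - ‖c - c'‖ ^ 2 / 2 := by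
    intro c hc c' hc'
    have := norm_sub_sq_real (c - q) (c' - q)
    rw [sub_sub_sub_cancel_right, hq c hc, hq c' hc'] at this
    linarith
  have row : ∀ c ∈ T, n * a ^ 2 ≤ ∑ c' ∈ T, ‖c - c'‖ ^ 2 := by
    intro c hc
    rw [← sum_erase T (f := fun c' => ‖c - c'‖ ^ 2) (a := c) (by simp)]
    have := card_nsmul_le_sum (T.erase c) (fun c' => ‖c - c'‖ ^ 2) (a ^ 2) fun c' hc' =>
      pow_le_pow_left₀ ha (hsep hc (mem_of_mem_erase hc') (ne_of_mem_erase hc').symm) 2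
    simpa [card_erase_of_mem hc, hT] using this
  have hrows := sum_le_sum row
  rw [sum_const, hT, nsmul_eq_mul] at hrows
  push_cast at hrows
  have hsum_nonneg : 0 ≤ ∑ c ∈ T, ∑ c' ∈ T, ⟪c - q, c' - q⟫ := by
    rw [sum_comm]
    simpa only [sum_inner, inner_sum] using real_inner_self_nonneg (x := ∑ c ∈ T, (c - q))
  have hsum : ∑ c ∈ T, ∑ c' ∈ T, ⟪c - q, c' - q⟫
      = (n + 1) ^ 2 * r ^ 2 - (∑ c ∈ T, ∑ c' ∈ T, ‖c - c'‖ ^ 2) / 2 := by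
    rw [sum_congr rfl fun c hc => sum_congr rfl fun c' hc' => inner_eq c hc c' hc']
    simp only [sum_sub_distrib, sum_const, hT, ← sum_div, nsmul_eq_mul]
    push_cast
    ring
  have hn : (0 : ℝ) < n + 1 := by positivity
  refine le_of_mul_le_mul_left ?_ hn
  linarith

theorem finrank_sub_finrank_lt_card_of_orthogonal_span_le [FiniteDimensional ℝ E]
    {S : Finset E} (hS : (0 : E) ∈ S) {W : Submodule ℝ E}
    (h : (Submodule.span ℝ (S : Set E))ᗮ ≤ W) :
    finrank ℝ E - finrank ℝ W < #S := by
  classical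
  have hsum := Submodule.finrank_add_finrank_orthogonal (Submodule.span ℝ (S : Set E))
  have hW := Submodule.finrank_mono h
  have hspan : finrank ℝ (Submodule.span ℝ (S : Set E)) ≤ #(S.erase 0) := by
    have := finrank_span_finset_le_card (R := ℝ) (S.erase 0)
    rwa [coe_erase, Set.finrank, Submodule.span_sdiff_singleton_zero] at this
  rw [card_erase_of_mem hS] at hspan
  have := card_pos.2 ⟨0, hS⟩
  omega

end InnerProductSpace

theorem Set.Pairwise.finite_inter_of_totallyBounded {X : Type*} [PseudoMetricSpace X]
    {C K : Set X} {ε : ℝ} (hε : 0 < ε) (hC : C.Pairwise fun c c' => ε ≤ dist c c')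
    (hK : TotallyBounded K) : (C ∩ K).Finite := by
  obtain ⟨t, ht, hKt⟩ := totallyBounded_iff.1 hK (ε / 2) (half_pos hε)
  have hsub : ∀ y, (C ∩ ball y (ε / 2)).Subsingleton := by
    rintro y c ⟨hc, hcy⟩ c' ⟨hc', hc'y⟩
    by_contra hne
    linarith [hC hc hc' hne, dist_triangle_right c c' y, mem_ball.1 hcy, mem_ball.1 hc'y]
  refine (ht.biUnion fun y _ => (hsub y).finite).subset ?_
  rintro c ⟨hc, hcK⟩
  obtain ⟨y, hy, hcy⟩ := Set.mem_iUnion₂.1 (hKt hcK)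
  exact Set.mem_iUnion₂.2 ⟨y, hy, hc, hcy⟩

section IntrinsicInterior

variable {V : Type*} [AddCommGroup V] [Module ℝ V] [TopologicalSpace V] [IsTopologicalAddGroup V]
  [ContinuousSMul ℝ V] {s : Set V} {x y : V}

theorem eventually_lineMap_mem_of_mem_intrinsicInterior (hx : x ∈ intrinsicInterior ℝ s)
    (hy : y ∈ affineSpan ℝ s) : ∀ᶠ t in 𝓝 (0 : ℝ), AffineMap.lineMap x y t ∈ s := by
  obtain ⟨z, hz, rfl⟩ := hx
  have hpath : Continuous fun t : ℝ =>
      (⟨AffineMap.lineMap (z : V) y t, AffineMap.lineMap_mem t z.2 hy⟩ : affineSpan ℝ s) :=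
    AffineMap.lineMap_continuous.subtype_mk _
  exact (hpath.tendsto' 0 z (by simp)).eventually (mem_interior_iff_mem_nhds.1 hz)

theorem AffineMap.eq_of_isMaxOn_of_mem_intrinsicInterior (f : V →ᵃ[ℝ] ℝ) (hf : IsMaxOn f s x)
    (hx : x ∈ intrinsicInterior ℝ s) (hy : y ∈ affineSpan ℝ s) : f y = f x := by
  have hle : ∀ᶠ t in 𝓝 (0 : ℝ), t * (f y - f x) ≤ 0 :=
    (eventually_lineMap_mem_of_mem_intrinsicInterior hx hy).mono fun t ht => by
      have := isMaxOn_iff.1 hf _ ht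
      rwa [AffineMap.apply_lineMap, AffineMap.lineMap_apply_ring', add_le_iff_nonpos_left] at this
  obtain ⟨t₁, ht₁, ht₁_pos⟩ :=
    ((hle.filter_mono nhdsWithin_le_nhds).and (self_mem_nhdsWithin (s := Set.Ioi 0))).exists
  obtain ⟨t₂, ht₂, ht₂_neg⟩ :=
    ((hle.filter_mono nhdsWithin_le_nhds).and (self_mem_nhdsWithin (s := Set.Iio 0))).exists
  nlinarith [show (0 : ℝ) < t₁ from ht₁_pos, show t₂ < (0 : ℝ) from ht₂_neg]

end IntrinsicInterior

section Voronoi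

variable {d : ℕ}

theorem convex_voronoiCell (C : Set (EuclideanSpace ℝ (Fin d))) : Convex ℝ (VoronoiCell C) := by
  have hC : VoronoiCell C = ⋂ c ∈ C, {x | 2 * ⟪x, c⟫ ≤ ‖c‖ ^ 2} := by
    ext x
    simp [VoronoiCell, norm_le_norm_sub_iff]
  rw [hC]
  refine convex_iInter₂ fun c _ => convex_halfSpace_le ⟨fun x y => ?_, fun r x => ?_⟩ _
  · simp only [inner_add_left, mul_add]
  · simp only [real_inner_smul_left, smul_eq_mul]
    ring

def activeCenters (C : Set (EuclideanSpace ℝ (Fin d))) (x : EuclideanSpace ℝ (Fin d)) :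
    Set (EuclideanSpace ℝ (Fin d)) :=
  {c ∈ C | ‖x - c‖ = ‖x‖}

theorem activeCenters_subset (C : Set (EuclideanSpace ℝ (Fin d))) (x : EuclideanSpace ℝ (Fin d)) :
    activeCenters C x ⊆ C ∩ closedBall 0 (2 * ‖x‖) := by
  rintro c ⟨hc, hcx⟩
  refine ⟨hc, mem_closedBall_zero_iff.2 ?_⟩
  have := norm_sub_le x (x - c)
  rw [sub_sub_cancel] at this
  linarith

/-- An inactive center `c` with `‖c‖ ≤ 2‖x‖ + 2` satisfies its constraint strictly at `x`, hence
near `x`, and there are finitely many of them; a farther center cannot cut the unit ball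
around `x`. -/
theorem eventually_mem_voronoiCell {C : Set (EuclideanSpace ℝ (Fin d))}
    (hC : ∀ R, (C ∩ closedBall 0 R).Finite) {x : EuclideanSpace ℝ (Fin d)}
    (hx : x ∈ VoronoiCell C) :
    ∀ᶠ y in 𝓝 x, (∀ c ∈ activeCenters C x, ‖y‖ ≤ ‖y - c‖) → y ∈ VoronoiCell C := by
  set R := 2 * ‖x‖ + 2
  have hnear : ∀ᶠ y in 𝓝 x, ∀ c ∈ (C ∩ closedBall 0 R) \ activeCenters C x,
      ‖y‖ < ‖y - c‖ := by
    refine (hC R).sdiff.eventually_all.2 fun c ⟨⟨hc, _⟩, hcx⟩ => ?_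
    refine continuous_norm.continuousAt.eventually_lt
      (continuous_id.sub continuous_const).norm.continuousAt ?_
    exact (hx c hc).lt_of_ne fun h => hcx ⟨hc, h.symm⟩
  filter_upwards [hnear, ball_mem_nhds x one_pos] with y hnear hy hactive c hc
  by_cases hcx : c ∈ activeCenters C x
  · exact hactive c hcx
  by_cases hcR : ‖c‖ ≤ R
  · exact (hnear c ⟨⟨hc, mem_closedBall_zero_iff.2 hcR⟩, hcx⟩).le
  · have hyx : ‖y‖ < ‖x‖ + 1 := by
      linarith [norm_sub_norm_le y x, dist_eq_norm y x, mem_ball.1 hy]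
    linarith [norm_sub_norm_le c y, norm_sub_rev c y]

theorem norm_sub_eq_norm_of_mem_affineSpan {C F : Set (EuclideanSpace ℝ (Fin d))}
    (hFC : F ⊆ VoronoiCell C) {x : EuclideanSpace ℝ (Fin d)} (hx : x ∈ intrinsicInterior ℝ F)
    {c : EuclideanSpace ℝ (Fin d)} (hc : c ∈ activeCenters C x)
    {y : EuclideanSpace ℝ (Fin d)} (hy : y ∈ affineSpan ℝ F) : ‖y - c‖ = ‖y‖ := by
  let f : EuclideanSpace ℝ (Fin d) →ᵃ[ℝ] ℝ := (innerSL ℝ c).toLinearMap.toAffineMap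
  have hxc := (norm_sub_eq_norm_iff x c).1 hc.2
  have hmax : IsMaxOn f F x := fun z hz => by
    have := (norm_le_norm_sub_iff z c).1 (hFC hz c hc.1)
    simp only [Set.mem_ofPred_eq, f, LinearMap.coe_toAffineMap, ContinuousLinearMap.coe_coe,
      innerSL_apply_apply, real_inner_comm _ c]
    linarith
  have hyx := f.eq_of_isMaxOn_of_mem_intrinsicInterior hmax hx hy
  simp only [f, LinearMap.coe_toAffineMap, ContinuousLinearMap.coe_coe, innerSL_apply_apply,
    real_inner_comm _ c] at hyx
  rw [norm_sub_eq_norm_iff, hyx, hxc]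

theorem orthogonal_span_activeCenters_le_direction {C F : Set (EuclideanSpace ℝ (Fin d))}
    (hC : ∀ R, (C ∩ closedBall 0 R).Finite) (hF : IsExtreme ℝ (VoronoiCell C) F)
    {x : EuclideanSpace ℝ (Fin d)} (hx : x ∈ F) :
    (Submodule.span ℝ (activeCenters C x))ᗮ ≤ (affineSpan ℝ F).direction := by
  intro v hv
  have hmem : ∀ᶠ t in 𝓝 (0 : ℝ), x + t • v ∈ VoronoiCell C := by
    have hlim : Tendsto (fun t : ℝ => x + t • v) (𝓝 0) (𝓝 x) :=
      (continuous_const.add (continuous_id.smul continuous_const)).tendsto' 0 x (by simp)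
    refine (hlim.eventually (eventually_mem_voronoiCell hC (hF.subset hx))).mono
      fun t ht => ht fun c hc => ?_
    have hvc : ⟪v, c⟫ = 0 := Submodule.inner_left_of_mem_orthogonal (Submodule.subset_span hc) hv
    rw [norm_le_norm_sub_iff, inner_add_left, real_inner_smul_left, hvc, mul_zero, add_zero]
    exact ((norm_sub_eq_norm_iff x c).1 hc.2).le
  have hmem_neg : ∀ᶠ t in 𝓝 (0 : ℝ), x + (-t) • v ∈ VoronoiCell C :=
    (continuous_neg.tendsto' 0 0 neg_zero).eventually hmem
  obtain ⟨t, ⟨htP, htP'⟩, ht⟩ := (((hmem.and hmem_neg).filter_mono nhdsWithin_le_nhds).and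
    (self_mem_nhdsWithin (s := {0}ᶜ))).exists
  have hmid : x ∈ openSegment ℝ (x + t • v) (x + (-t) • v) := by
    convert midpoint_mem_openSegment (𝕜 := ℝ) (x + t • v) (x + (-t) • v) using 1
    rw [midpoint_eq_smul_add, invOf_eq_inv]
    module
  have htF : x + t • v ∈ F := hF.left_mem_of_mem_openSegment htP htP' hx hmid
  have := AffineSubspace.vsub_mem_direction (subset_affineSpan ℝ F htF) (subset_affineSpan ℝ F hx)
  rwa [vsub_eq_sub, add_sub_cancel_left, Submodule.smul_mem_iff _ ht] at this

end Voronoi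

theorem faceDist_ge_sqrt_general (d i : ℕ) (hid : i ≤ d)
    (C : Set (EuclideanSpace ℝ (Fin d))) (hC : IsUnitBallPacking C)
    (F : Set (EuclideanSpace ℝ (Fin d)))
    (hF : IsFaceDim (VoronoiCell C) F (d - i)) :
    Real.sqrt (2 * i / (i + 1)) ≤ faceDist F := by
  classical
  obtain ⟨h0C, hsep⟩ := hC
  obtain ⟨hFexp, hFne, hdim⟩ := hF
  have hpair : C.Pairwise fun c c' => 2 ≤ ‖c - c'‖ := fun c hc c' hc' => hsep c hc c' hc'
  have hfin (R : ℝ) : (C ∩ closedBall 0 R).Finite :=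
    hpair.finite_inter_of_totallyBounded two_pos (isCompact_closedBall 0 R).totallyBounded
  obtain ⟨x, hx⟩ := hFne.intrinsicInterior (hFexp.convex (convex_voronoiCell C))
  have hxF := intrinsicInterior_subset hx
  have hS := (hfin _).subset (activeCenters_subset C x)
  have hcard : i + 1 ≤ #hS.toFinset := by
    have := finrank_sub_finrank_lt_card_of_orthogonal_span_le (S := hS.toFinset)
      (by simpa [activeCenters] using h0C)
      (by simpa using orthogonal_span_activeCenters_le_direction hfin hFexp.isExtreme hxF)
    rw [hdim, finrank_euclideanSpace_fin] at this
    omega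
  obtain ⟨T, hTS, hT⟩ := exists_subset_card_eq hcard
  have hTS' : ∀ c ∈ T, c ∈ activeCenters C x := fun c hc => hS.mem_toFinset.1 (hTS hc)
  rw [faceDist, le_infDist ⟨x, subset_affineSpan ℝ F hxF⟩]
  intro q hq
  have := nat_mul_sq_le_of_pairwise_le_norm_sub hT zero_le_two
    (hpair.mono fun c hc => (hTS' c hc).1) (q := q) fun c hc => by
      rw [norm_sub_rev]
      exact norm_sub_eq_norm_of_mem_affineSpan hFexp.subset hx (hTS' c hc) hq
  rw [dist_zero_left, Real.sqrt_le_left (norm_nonneg q), div_le_iff₀ (by positivity)]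
  linarith

/-- **Corollary 1 (Rogers).** For every face `F` of dimension `d - i` (`1 ≤ i ≤ d`) of a
bounded Voronoi cell `P` in a unit ball packing of `ℝ^d`, one has `√(2i/(i+1)) ≤ R(F)`. -/
theorem faceDist_ge_sqrt (d i : ℕ) (hi : 1 ≤ i) (hid : i ≤ d)
    (C : Set (EuclideanSpace ℝ (Fin d))) (hC : IsUnitBallPacking C)
    (hBdd : Bornology.IsBounded (VoronoiCell C))
    (F : Set (EuclideanSpace ℝ (Fin d)))
    (hF : IsFaceDim (VoronoiCell C) F (d - i)) :
    Real.sqrt (2 * i / (i + 1)) ≤ faceDist F :=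
  faceDist_ge_sqrt_general d i hid C hC F hF
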